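/- Let I ⊆ ℝ be an open interval, p : I → Matₙ(ℝ) continuous with p(u) symmetric for all u, u₀ ∈ I, and let S : I → Matₙ(ℝ) be a differentiable function with S(u) symmetric for all u ∈ I, satisfying the Sachs equation S'(u) + S(u)² + p(u) = 0 on I. Then there exists a twice differentiable function L : I → Matₙ(ℝ) with L(u₀) = 1 (the identity matrix), L'(u) = S(u)·L(u) on I, such that L(u) is invertible for every u ∈ I, L satisfies the Jacobi equation L''(u) + p(u)·L(u) = 0 on I, and L satisfies the isotropy condition L(u)ᵀ·L'(u) = L'(u)ᵀ·L(u) for all u ∈ I. -/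

import Mathlib

/-!
The solution `L` of the linear equation `L' = S L`, `L u₀ = 1` is the sum of the Peano–Baker
series `∑ₖ Lₖ`, with `L₀ = 1` and `Lₖ₊₁ u = ∫_{u₀}^u S Lₖ`; on a compact subinterval where
`‖S‖ ≤ K` the terms are bounded by `(K |u - u₀|)ᵏ / k!`, so the series of derivatives converges
locally uniformly. Solving `M' = -M S`, `M u₀ = 1` in the same way, `M L` has derivative zero,
hence `M L = 1` and `L` is invertible. The Jacobi equation is `(S L)' = S' L + S² L = -p L`, and
isotropy is `Lᵀ S L = (S L)ᵀ L` for symmetric `S`.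
-/

open Matrix Set intervalIntegral MeasureTheory
open scoped Interval Nat Topology

attribute [local instance] Matrix.frobeniusNormedRing Matrix.frobeniusNormedAlgebra

theorem exists_Icc_subset_Ioo_of_mem {a b x y : ℝ} (hx : x ∈ Ioo a b) (hy : y ∈ Ioo a b) :
    ∃ c d, Icc c d ⊆ Ioo a b ∧ x ∈ Ioo c d ∧ y ∈ Ioo c d := by
  have := lt_min hx.1 hy.1
  have := max_lt hx.2 hy.2
  refine ⟨(a + min x y) / 2, (max x y + b) / 2, ?_, ⟨?_, ?_⟩, ⟨?_, ?_⟩⟩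
  · exact fun t ht => ⟨by linarith [ht.1], by linarith [ht.2]⟩
  all_goals linarith [min_le_left x y, min_le_right x y, le_max_left x y, le_max_right x y]

theorem hasDerivAt_integral_of_continuousOn_Ioo {E : Type*} [NormedAddCommGroup E]
    [NormedSpace ℝ E] [CompleteSpace E] {a b u₀ u : ℝ} {f : ℝ → E}
    (hf : ContinuousOn f (Ioo a b)) (hu₀ : u₀ ∈ Ioo a b) (hu : u ∈ Ioo a b) :
    HasDerivAt (fun w => ∫ t in u₀..w, f t) (f u) u :=
  integral_hasDerivAt_right ((hf.mono (ordConnected_Ioo.uIcc_subset hu₀ hu)).intervalIntegrable)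
    (hf.stronglyMeasurableAtFilter isOpen_Ioo u hu) (hf.continuousAt (Ioo_mem_nhds hu.1 hu.2))

section PeanoBaker

variable {A : Type*} [NormedRing A] [NormedAlgebra ℝ A]

noncomputable def peanoBakerTerm (S : ℝ → A) (u₀ : ℝ) : ℕ → ℝ → A
  | 0 => fun _ => 1
  | k + 1 => fun u => ∫ t in u₀..u, S t * peanoBakerTerm S u₀ k t

noncomputable def peanoBaker (S : ℝ → A) (u₀ u : ℝ) : A :=
  ∑' k, peanoBakerTerm S u₀ k u

variable {S : ℝ → A} {a b u₀ : ℝ}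

theorem peanoBakerTerm_succ_self (k : ℕ) : peanoBakerTerm S u₀ (k + 1) u₀ = 0 :=
  integral_same

theorem peanoBaker_self : peanoBaker S u₀ u₀ = 1 := by
  rw [peanoBaker, tsum_eq_single 0 fun k hk => ?_]
  · rfl
  · obtain ⟨k, rfl⟩ := Nat.exists_eq_succ_of_ne_zero hk
    exact peanoBakerTerm_succ_self k

variable [CompleteSpace A]

theorem continuousOn_peanoBakerTerm (hS : ContinuousOn S (Ioo a b)) (hu₀ : u₀ ∈ Ioo a b) :
    ∀ k, ContinuousOn (peanoBakerTerm S u₀ k) (Ioo a b)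
  | 0 => continuousOn_const
  | k + 1 => fun _ hu =>
    (hasDerivAt_integral_of_continuousOn_Ioo (hS.mul (continuousOn_peanoBakerTerm hS hu₀ k))
      hu₀ hu).continuousAt.continuousWithinAt

theorem hasDerivAt_peanoBakerTerm_succ (hS : ContinuousOn S (Ioo a b)) (hu₀ : u₀ ∈ Ioo a b)
    (k : ℕ) {u : ℝ} (hu : u ∈ Ioo a b) :
    HasDerivAt (peanoBakerTerm S u₀ (k + 1)) (S u * peanoBakerTerm S u₀ k u) u :=
  hasDerivAt_integral_of_continuousOn_Ioo (hS.mul (continuousOn_peanoBakerTerm hS hu₀ k)) hu₀ hu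

theorem norm_peanoBakerTerm_le {c d K : ℝ} (hS : ContinuousOn S (Ioo a b))
    (hsub : Icc c d ⊆ Ioo a b) (hu₀ : u₀ ∈ Icc c d) (hK : ∀ t ∈ Icc c d, ‖S t‖ ≤ K) (k : ℕ) :
    ∀ u ∈ Icc c d, ‖peanoBakerTerm S u₀ k u‖ ≤ ‖(1 : A)‖ * K ^ k * |u - u₀| ^ k / k ! := by
  have hK0 : 0 ≤ K := (norm_nonneg _).trans (hK u₀ hu₀)
  induction k with
  | zero => intro u _; simp [peanoBakerTerm]
  | succ k ih =>
    intro u hu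
    set C := ‖(1 : A)‖ * K ^ (k + 1) / (k ! : ℝ)
    have hseg : Ι u₀ u ⊆ Icc c d :=
      uIoc_subset_uIcc.trans (ordConnected_Icc.uIcc_subset hu₀ hu)
    have hint : IntegrableOn (fun t => S t * peanoBakerTerm S u₀ k t) (Ι u₀ u) :=
      ((hS.mul (continuousOn_peanoBakerTerm hS (hsub hu₀) k)).mono
        ((ordConnected_Icc.uIcc_subset hu₀ hu).trans hsub)).integrableOn_compact
        isCompact_uIcc |>.mono_set uIoc_subset_uIcc
    have hpt : ∀ t ∈ Ι u₀ u, ‖S t * peanoBakerTerm S u₀ k t‖ ≤ C * |t - u₀| ^ k := fun t ht =>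
      calc ‖S t * peanoBakerTerm S u₀ k t‖ ≤ ‖S t‖ * ‖peanoBakerTerm S u₀ k t‖ := norm_mul_le _ _
        _ ≤ K * (‖(1 : A)‖ * K ^ k * |t - u₀| ^ k / k !) :=
          mul_le_mul (hK t (hseg ht)) (ih t (hseg ht)) (norm_nonneg _) hK0
        _ = C * |t - u₀| ^ k := by ring
    calc ‖peanoBakerTerm S u₀ (k + 1) u‖
        ≤ ∫ t in Ι u₀ u, ‖S t * peanoBakerTerm S u₀ k t‖ := norm_integral_le_integral_norm_uIoc
      _ ≤ ∫ t in Ι u₀ u, C * |t - u₀| ^ k :=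
          setIntegral_mono_on hint.norm
            (Continuous.integrableOn_uIoc (by fun_prop)) measurableSet_uIoc hpt
      _ = C * (|u - u₀| ^ (k + 1) / (k + 1)) := by
          rw [MeasureTheory.integral_const_mul, integral_pow_abs_sub_uIoc]
      _ = ‖(1 : A)‖ * K ^ (k + 1) * |u - u₀| ^ (k + 1) / (k + 1)! := by
          simp only [C, Nat.factorial_succ]; push_cast; field_simp

theorem norm_peanoBakerTerm_le_of_mem_Icc {c d K : ℝ} (hS : ContinuousOn S (Ioo a b))
    (hsub : Icc c d ⊆ Ioo a b) (hu₀ : u₀ ∈ Icc c d) (hK : ∀ t ∈ Icc c d, ‖S t‖ ≤ K) (k : ℕ)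
    {u : ℝ} (hu : u ∈ Icc c d) :
    ‖peanoBakerTerm S u₀ k u‖ ≤ ‖(1 : A)‖ * ((K * (d - c)) ^ k / k !) := by
  have hK0 : 0 ≤ K := (norm_nonneg _).trans (hK u₀ hu₀)
  have hdist : |u - u₀| ≤ d - c :=
    abs_sub_le_iff.2 ⟨by linarith [hu.2, hu₀.1], by linarith [hu.1, hu₀.2]⟩
  calc ‖peanoBakerTerm S u₀ k u‖ ≤ ‖(1 : A)‖ * K ^ k * |u - u₀| ^ k / k ! :=
        norm_peanoBakerTerm_le hS hsub hu₀ hK k u hu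
    _ ≤ ‖(1 : A)‖ * K ^ k * (d - c) ^ k / k ! := by gcongr
    _ = ‖(1 : A)‖ * ((K * (d - c)) ^ k / k !) := by rw [mul_pow]; ring

theorem hasDerivAt_peanoBaker (hS : ContinuousOn S (Ioo a b)) (hu₀ : u₀ ∈ Ioo a b) {u : ℝ}
    (hu : u ∈ Ioo a b) : HasDerivAt (peanoBaker S u₀) (S u * peanoBaker S u₀ u) u := by
  obtain ⟨c, d, hsub, hu₀', hu'⟩ := exists_Icc_subset_Ioo_of_mem hu₀ hu
  obtain ⟨K, hK⟩ := isCompact_Icc.exists_bound_of_continuousOn (hS.mono hsub)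
  have hK0 : 0 ≤ K := (norm_nonneg _).trans (hK u₀ (Ioo_subset_Icc_self hu₀'))
  have hbound := fun k {y} (hy : y ∈ Ioo c d) =>
    norm_peanoBakerTerm_le_of_mem_Icc hS hsub (Ioo_subset_Icc_self hu₀') hK k
      (Ioo_subset_Icc_self hy)
  have hmajorant := (Real.summable_pow_div_factorial (K * (d - c))).mul_left ‖(1 : A)‖
  have hsum : ∀ y ∈ Ioo c d, Summable fun k => peanoBakerTerm S u₀ k y := fun y hy =>
    .of_norm_bounded hmajorant fun k => hbound k hy
  have htail : HasDerivAt (fun y => ∑' k, peanoBakerTerm S u₀ (k + 1) y)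
      (∑' k, S u * peanoBakerTerm S u₀ k u) u :=
    hasDerivAt_tsum_of_isPreconnected (hmajorant.mul_left K) isOpen_Ioo isPreconnected_Ioo
      (fun k y hy => hasDerivAt_peanoBakerTerm_succ hS hu₀ k (hsub (Ioo_subset_Icc_self hy)))
      (fun k y hy => (norm_mul_le _ _).trans
        (mul_le_mul (hK y (Ioo_subset_Icc_self hy)) (hbound k hy) (norm_nonneg _) hK0))
      hu₀' (by simp only [peanoBakerTerm_succ_self, summable_zero]) hu'
  have hsplit : peanoBaker S u₀ =ᶠ[𝓝 u] fun y => 1 + ∑' k, peanoBakerTerm S u₀ (k + 1) y :=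
    Filter.eventually_of_mem (Ioo_mem_nhds hu'.1 hu'.2) fun y hy =>
      (hsum y hy).tsum_eq_zero_add
  rw [peanoBaker, ← (hsum u hu').tsum_mul_left]
  exact (htail.const_add 1).congr_of_eventuallyEq hsplit

theorem exists_hasDerivAt_eq_mul_left (hS : ContinuousOn S (Ioo a b)) (hu₀ : u₀ ∈ Ioo a b) :
    ∃ L : ℝ → A, L u₀ = 1 ∧ ∀ u ∈ Ioo a b, HasDerivAt L (S u * L u) u :=
  ⟨peanoBaker S u₀, peanoBaker_self, fun _ hu => hasDerivAt_peanoBaker hS hu₀ hu⟩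

theorem exists_hasDerivAt_eq_mul_right {T : ℝ → A} (hT : ContinuousOn T (Ioo a b))
    (hu₀ : u₀ ∈ Ioo a b) : ∃ M : ℝ → A, M u₀ = 1 ∧ ∀ u ∈ Ioo a b, HasDerivAt M (M u * T u) u := by
  obtain ⟨P, hP₀, hP⟩ := exists_hasDerivAt_eq_mul_left
    (MulOpposite.continuous_op.comp_continuousOn hT) hu₀
  exact ⟨fun u => (P u).unop, congrArg MulOpposite.unop hP₀, fun u hu =>
    (MulOpposite.opContinuousLinearEquiv ℝ (M := A)).symm.hasFDerivAt.comp_hasDerivAt u (hP u hu)⟩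

theorem exists_mul_eq_one_of_hasDerivAt_eq_mul_left (hS : ContinuousOn S (Ioo a b))
    (hu₀ : u₀ ∈ Ioo a b) {L : ℝ → A} (hL₀ : L u₀ = 1)
    (hL : ∀ u ∈ Ioo a b, HasDerivAt L (S u * L u) u) :
    ∃ M : ℝ → A, ∀ u ∈ Ioo a b, M u * L u = 1 := by
  obtain ⟨M, hM₀, hM⟩ := exists_hasDerivAt_eq_mul_right hS.neg hu₀
  have hML : ∀ u ∈ Ioo a b, HasDerivAt (fun w => M w * L w) 0 u := fun u hu => by
    have hcancel : M u * -S u * L u + M u * (S u * L u) = 0 := by noncomm_ring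
    rw [← hcancel]
    exact (hM u hu).mul (hL u hu)
  refine ⟨M, fun u hu => ?_⟩
  rw [isOpen_Ioo.is_const_of_deriv_eq_zero isPreconnected_Ioo (f := fun w => M w * L w)
    (fun w hw => (hML w hw).differentiableAt.differentiableWithinAt) (fun w hw => (hML w hw).deriv)
    hu hu₀, hM₀, hL₀, one_mul]

end PeanoBaker

theorem sachs_to_lagrangian_matrix {n : ℕ} (a b u₀ : ℝ) (hu₀ : u₀ ∈ Set.Ioo a b)
    (p S : ℝ → Matrix (Fin n) (Fin n) ℝ)
    (hSsym : ∀ u ∈ Set.Ioo a b, (S u)ᵀ = S u)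
    (hSachs : ∀ u ∈ Set.Ioo a b, HasDerivAt S (-(S u * S u + p u)) u) :
    ∃ L : ℝ → Matrix (Fin n) (Fin n) ℝ,
      L u₀ = 1 ∧
      (∀ u ∈ Set.Ioo a b, HasDerivAt L (S u * L u) u) ∧
      (∀ u ∈ Set.Ioo a b, IsUnit (L u)) ∧
      (∀ u ∈ Set.Ioo a b, HasDerivAt (fun w => S w * L w) (-(p u * L u)) u) ∧
      (∀ u ∈ Set.Ioo a b, (L u)ᵀ * (S u * L u) = (S u * L u)ᵀ * L u) := by
  have hS : ContinuousOn S (Ioo a b) := fun u hu =>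
    (hSachs u hu).continuousAt.continuousWithinAt
  obtain ⟨L, hL₀, hL⟩ := exists_hasDerivAt_eq_mul_left hS hu₀
  obtain ⟨M, hML⟩ := exists_mul_eq_one_of_hasDerivAt_eq_mul_left hS hu₀ hL₀ hL
  refine ⟨L, hL₀, hL, fun u hu => IsUnit.of_mul_eq_one_right _ (hML u hu), fun u hu => ?_,
    fun u hu => ?_⟩
  · have hjacobi : -(S u * S u + p u) * L u + S u * (S u * L u) = -(p u * L u) := by
      noncomm_ring
    rw [← hjacobi]
    exact (hSachs u hu).mul (hL u hu)
  · rw [transpose_mul, hSsym u hu, Matrix.mul_assoc]
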